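/- Let n ≥ 1, a ∈ ℝⁿ, d ∈ ℝ, and suppose {a_i : i ∈ [n]} forms a minimal cover of d. Set Δ := ∑_{i=1}^n a_i − d and d_i := a_i − Δ for each i. Then for every (x,y) ∈ [0,1]ⁿ × [0,1]ⁿ with ∑_{i=1}^n a_i x_i y_i ≥ d, the bilinear cover inequality holds: ∑_{i=1}^n (√a_i / (√a_i − √d_i)) (√(x_i y_i) − 1) ≥ −1. -/
import Mathlib


open Real

/-- If {a_i : i ∈ [n]} forms a minimal cover of d, Δ := ∑ a_i − d,
d_i := a_i − Δ, then every (x,y) ∈ [0,1]ⁿ × [0,1]ⁿ with ∑ a_i x_i y_i ≥ d satisfies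
the bilinear cover inequality ∑ (√a_i/(√a_i − √d_i))(√(x_i y_i) − 1) ≥ −1. -/
theorem stmt_3 (n : ℕ) (hn : 1 ≤ n) (a : Fin n → ℝ) (d : ℝ)
    (hpos : ∀ i, 0 < a i) (hd : 0 < d)
    (hsum : d < ∑ i, a i)
    (hmin : ∀ K : Finset (Fin n), K ⊂ Finset.univ → ∑ i ∈ K, a i ≤ d)
    (Δ : ℝ) (hΔ : Δ = (∑ i, a i) - d)
    (x y : Fin n → ℝ)
    (hx : ∀ i, x i ∈ Set.Icc (0 : ℝ) 1) (hy : ∀ i, y i ∈ Set.Icc (0 : ℝ) 1)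
    (hxy : d ≤ ∑ i, a i * (x i * y i)) :
    -1 ≤ ∑ i, Real.sqrt (a i) / (Real.sqrt (a i) - Real.sqrt (a i - Δ))
            * (Real.sqrt (x i * y i) - 1) := by
  have ht0 : ∀ i, 0 ≤ x i * y i := fun i => mul_nonneg (hx i).1 (hy i).1
  have ht1 : ∀ i, x i * y i ≤ 1 := fun i => by
    nlinarith [(hx i).1, (hx i).2, (hy i).1, (hy i).2]
  have hΔpos : 0 < Δ := by rw [hΔ]; linarith
  have hdi : ∀ i, 0 ≤ a i - Δ := by
    intro i
    have h := hmin (Finset.univ.erase i)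
      (Finset.erase_ssubset (Finset.mem_univ i))
    have h2 : ∑ j ∈ Finset.univ.erase i, a j = (∑ j, a j) - a i :=
      Finset.sum_erase_eq_sub (Finset.mem_univ i)
    rw [h2] at h
    linarith
  have hat : ∀ i, a i - Δ ≤ a i * (x i * y i) := by
    intro i
    have h1 : ∑ j ∈ Finset.univ.erase i, a j * (x j * y j)
        ≤ ∑ j ∈ Finset.univ.erase i, a j :=
      Finset.sum_le_sum fun j _ => by nlinarith [(hpos j).le, ht1 j, ht0 j]
    have h2 : ∑ j, a j * (x j * y j)
        = a i * (x i * y i) + ∑ j ∈ Finset.univ.erase i, a j * (x j * y j) :=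
      (Finset.add_sum_erase _ _ (Finset.mem_univ i)).symm
    have h3 : ∑ j ∈ Finset.univ.erase i, a j = (∑ j, a j) - a i :=
      Finset.sum_erase_eq_sub (Finset.mem_univ i)
    rw [h2] at hxy
    linarith
  have key : ∀ i, Real.sqrt (a i) / (Real.sqrt (a i) - Real.sqrt (a i - Δ))
      * (1 - Real.sqrt (x i * y i)) ≤ a i * (1 - x i * y i) / Δ := by
    intro i
    set s := Real.sqrt (a i) with hs_def
    set u := Real.sqrt (a i - Δ) with hu_def
    set r := Real.sqrt (x i * y i) with hr_def
    have hs : 0 < s := Real.sqrt_pos.2 (hpos i)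
    have hu0 : 0 ≤ u := Real.sqrt_nonneg _
    have hr0 : 0 ≤ r := Real.sqrt_nonneg _
    have hr1 : r ≤ 1 := Real.sqrt_le_one.mpr (ht1 i)
    have hus : u < s := Real.sqrt_lt_sqrt (hdi i) (by linarith)
    have husr : u ≤ s * r := by
      have h := Real.sqrt_le_sqrt (hat i)
      rwa [Real.sqrt_mul (hpos i).le] at h
    have hs2 : s ^ 2 = a i := Real.sq_sqrt (hpos i).le
    have hu2 : u ^ 2 = a i - Δ := Real.sq_sqrt (hdi i)
    have hr2 : r ^ 2 = x i * y i := Real.sq_sqrt (ht0 i)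
    rw [div_mul_eq_mul_div, div_le_div_iff₀ (by linarith) hΔpos]
    have hprod : 0 ≤ s * ((1 - r) * ((s - u) * (s * r - u))) :=
      mul_nonneg hs.le (mul_nonneg (by linarith)
        (mul_nonneg (by linarith) (by linarith)))
    have hΔeq : Δ = s ^ 2 - u ^ 2 := by linarith
    rw [← hs2, ← hr2, hΔeq]
    nlinarith [hprod]
  have hsum2 : ∑ i, Real.sqrt (a i) / (Real.sqrt (a i) - Real.sqrt (a i - Δ))
      * (1 - Real.sqrt (x i * y i)) ≤ 1 := by
    calc ∑ i, Real.sqrt (a i) / (Real.sqrt (a i) - Real.sqrt (a i - Δ))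
          * (1 - Real.sqrt (x i * y i))
        ≤ ∑ i, a i * (1 - x i * y i) / Δ := Finset.sum_le_sum fun i _ => key i
      _ = ((∑ i, a i) - ∑ i, a i * (x i * y i)) / Δ := by
          rw [← Finset.sum_div, ← Finset.sum_sub_distrib]
          congr 1
          exact Finset.sum_congr rfl fun i _ => by ring
      _ ≤ 1 := by
          rw [div_le_one hΔpos]
          linarith
  have heq : ∑ i, Real.sqrt (a i) / (Real.sqrt (a i) - Real.sqrt (a i - Δ))
      * (Real.sqrt (x i * y i) - 1)
      = - ∑ i, Real.sqrt (a i) / (Real.sqrt (a i) - Real.sqrt (a i - Δ))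
        * (1 - Real.sqrt (x i * y i)) := by
    rw [← Finset.sum_neg_distrib]
    exact Finset.sum_congr rfl fun i _ => by ring
  rw [heq]
  linarith
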